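/- Let C ⊆ ℝ^n be a compact convex set with span(C − C) = ℝ^n that is (α,p)-uniformly convex with respect to the C-norm ‖·‖_C for some α > 0 and p ≥ 2, and let f : ℝ^n → ℝ be convex, differentiable on an open set containing C, L-smooth over C with respect to ‖·‖_C for some L > 0, and have lower-bounded gradients: ‖∇f(x)‖_C* ≥ λ for all x ∈ C, for some λ > 0, where ‖·‖_C* is the dual norm of ‖·‖_C. Then (C,f) satisfies the strong (M,r)-growth property with M = L·(αλ)^{−2/p} and r = 2/p. -/

import Mathlib

open Set Finset Real Pointwise

noncomputable section

abbrev Eucl (n : ℕ) := EuclideanSpace ℝ (Fin n)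

variable {n : ℕ}

/-- A Frank–Wolfe vertex at `x`: a minimizer over `C` of the linear function `y ↦ ⟪∇f(x), y⟫`. -/
def IsFWVertex (C : Set (Eucl n)) (f : Eucl n → ℝ) (x v : Eucl n) : Prop :=
  v ∈ C ∧ ∀ y ∈ C, (inner ℝ (gradient f x) v : ℝ) ≤ (inner ℝ (gradient f x) y : ℝ)

/-- The Wolfe gap `gap(x) = max_{y ∈ C} ⟪∇f(x), x - y⟫`. -/
def gapF (C : Set (Eucl n)) (f : Eucl n → ℝ) (x : Eucl n) : ℝ :=
  sSup ((fun y => (inner ℝ (gradient f x) (x - y) : ℝ)) '' C)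

/-- The primal suboptimality gap `subopt(x) = f(x) - min_{y ∈ C} f(y)`. -/
def suboptF (C : Set (Eucl n)) (f : Eucl n → ℝ) (x : Eucl n) : ℝ :=
  f x - sInf (f '' C)

/-- Bregman divergence `D_f(y, x) = f(y) - f(x) - ⟪∇f(x), y - x⟫`. -/
def bregmanD (f : Eucl n → ℝ) (y x : Eucl n) : ℝ :=
  f y - f x - (inner ℝ (gradient f x) (y - x) : ℝ)

/-- Strong `(M, r)`-growth property. -/
def StrongGrowth (C : Set (Eucl n)) (f : Eucl n → ℝ) (M r : ℝ) : Prop :=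
  ∀ x ∈ C, ∀ v, IsFWVertex C f x v → ∀ η ∈ Icc (0:ℝ) 1,
    bregmanD f (x + η • (v - x)) x ≤ M * η ^ 2 / 2 * gapF C f x ^ r

/-- Weak `(M, r)`-growth property. -/
def WeakGrowth (C : Set (Eucl n)) (f : Eucl n → ℝ) (M r : ℝ) : Prop :=
  ∀ x ∈ C, ∀ v, IsFWVertex C f x v → ∀ η ∈ Icc (0:ℝ) 1,
    bregmanD f (x + η • (v - x)) x * suboptF C f x ^ (1 - r) ≤ M * η ^ 2 / 2 * gapF C f x

/-- Gaps `(m, r)`-growth property. -/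
def GapsGrowth (C : Set (Eucl n)) (f : Eucl n → ℝ) (m r : ℝ) : Prop :=
  ∀ x ∈ C, m * suboptF C f x ^ (1 - r) ≤ gapF C f x

/-- `primaldual_t = min_{0 ≤ k ≤ t} (f(x_t) - f(x_k) + gap_k)`. -/
def primaldualSeq (C : Set (Eucl n)) (f : Eucl n → ℝ) (x : ℕ → Eucl n) (t : ℕ) : ℝ :=
  (Finset.range (t + 1)).inf' (Finset.nonempty_range_iff.mpr (Nat.succ_ne_zero t))
    (fun k => f (x t) - f (x k) + gapF C f (x k))

/-- The affine-invariant `C`-norm: the gauge (Minkowski functional) of `½(C - C)`. -/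
def CnormFn (C : Set (Eucl n)) : Eucl n → ℝ :=
  gauge ((2 : ℝ)⁻¹ • (C - C))

/-- The dual norm of the `C`-norm: `‖g‖_C* = sup {⟪g, x⟫ : ‖x‖_C ≤ 1}`. -/
def dualCnormFn (C : Set (Eucl n)) (g : Eucl n) : ℝ :=
  sSup ((fun x => (inner ℝ g x : ℝ)) '' {x : Eucl n | CnormFn C x ≤ 1})

/-- `f` satisfies a `(μ, θ)`-Hölderian error bound on `C` with respect to the norm-like
function `nrm`. -/
def HolderianErrorBound (C : Set (Eucl n)) (f : Eucl n → ℝ) (nrm : Eucl n → ℝ)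
    (μ θ : ℝ) : Prop :=
  ∀ x ∈ C,
    sInf ((fun y => nrm (x - y)) '' {y ∈ C | ∀ z ∈ C, f y ≤ f z}) ≤
      μ * (f x - sInf (f '' C)) ^ θ

/-- `f` is `L`-smooth over `C` with respect to the norm-like function `nrm`. -/
def SmoothOver (C : Set (Eucl n)) (f : Eucl n → ℝ) (nrm : Eucl n → ℝ) (L : ℝ) : Prop :=
  ∀ x ∈ C, ∀ y ∈ C,
    f y ≤ f x + (inner ℝ (gradient f x) (y - x) : ℝ) + L / 2 * nrm (x - y) ^ 2

/-- `C` is `(α, p)`-uniformly convex with respect to the norm-like function `nrm`. -/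
def UniformlyConvexSet (C : Set (Eucl n)) (nrm : Eucl n → ℝ) (α p : ℝ) : Prop :=
  ∀ x ∈ C, ∀ y ∈ C, ∀ γ ∈ Icc (0 : ℝ) 1, ∀ z : Eucl n, nrm z = 1 →
    γ • x + (1 - γ) • y + (γ * (1 - γ) * α * nrm (x - y) ^ p) • z ∈ C

/-! At a Frank–Wolfe vertex `v` the gap is `⟪∇f(x), x - v⟫`. Uniform convexity lets us move the
point `t x + (1 - t) v` by `t (1 - t) α ‖x - v‖_C^p` in any direction of unit `C`-norm and stay in
`C`; moving against the gradient and using the minimality of `v` gives, as `t → 0`,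
`α ‖x - v‖_C^p ⟪∇f(x), z⟫ ≤ gap(x)` for every unit `z`, hence `α λ ‖x - v‖_C^p ≤ gap(x)`.
Smoothness bounds `D_f(x + η (v - x), x)` by `(L/2) η² ‖x - v‖_C²`, and eliminating `‖x - v‖_C`
between the two inequalities gives the growth bound. -/

open Filter Topology

section CNorm

variable {C : Set (Eucl n)}

lemma neg_mem_half_sub_self {y : Eucl n} (hy : y ∈ (2 : ℝ)⁻¹ • (C - C)) :
    -y ∈ (2 : ℝ)⁻¹ • (C - C) := by
  obtain ⟨_, ⟨a, ha, b, hb, rfl⟩, rfl⟩ := hy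
  exact ⟨b - a, ⟨b, hb, a, ha, rfl⟩, by simp [smul_sub]⟩

lemma CnormFn_neg (w : Eucl n) : CnormFn C (-w) = CnormFn C w :=
  gauge_neg (fun _ ↦ neg_mem_half_sub_self) w

lemma CnormFn_nonneg (w : Eucl n) : 0 ≤ CnormFn C w :=
  gauge_nonneg w

lemma CnormFn_smul {c : ℝ} (hc : 0 ≤ c) (w : Eucl n) : CnormFn C (c • w) = c * CnormFn C w :=
  gauge_smul_of_nonneg hc w

lemma half_sub_self_mem_nhds_zero (hC : Convex ℝ C) (hne : C.Nonempty)
    (hspan : Submodule.span ℝ (C - C) = ⊤) : (2 : ℝ)⁻¹ • (C - C) ∈ 𝓝 (0 : Eucl n) := by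
  have hint : (interior C).Nonempty := by
    rw [hC.interior_nonempty_iff_affineSpan_eq_top,
      AffineSubspace.affineSpan_eq_top_iff_vectorSpan_eq_top_of_nonempty ℝ _ _ hne]
    exact hspan
  obtain ⟨u, hu⟩ := hint
  rw [set_smul_mem_nhds_zero_iff (by norm_num)]
  exact mem_interior_iff_mem_nhds.1
    (subset_interior_sub_left ⟨u, hu, u, interior_subset hu, sub_self u⟩)

lemma CnormFn_pos (hCb : Bornology.IsBounded C) (hC : Convex ℝ C) (hne : C.Nonempty)
    (hspan : Submodule.span ℝ (C - C) = ⊤) {w : Eucl n} (hw : w ≠ 0) : 0 < CnormFn C w := by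
  refine (gauge_pos (absorbent_nhds_zero (half_sub_self_mem_nhds_zero hC hne hspan)) ?_).2 hw
  exact (NormedSpace.isVonNBounded_iff ℝ).2 ((hCb.sub hCb).smul₀ _)

lemma dualCnormFn_le_of_forall_CnormFn_eq_one (hCb : Bornology.IsBounded C) (hC : Convex ℝ C)
    (hne : C.Nonempty) (hspan : Submodule.span ℝ (C - C) = ⊤) {g : Eucl n} {b : ℝ} (hb : 0 ≤ b)
    (h : ∀ z, CnormFn C z = 1 → inner ℝ g z ≤ b) : dualCnormFn C g ≤ b := by
  refine csSup_le ⟨_, 0, by simp [CnormFn, gauge_zero], rfl⟩ ?_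
  rintro _ ⟨w, hw, rfl⟩
  rcases le_or_gt (inner ℝ g w) 0 with hgw | hgw
  · exact hgw.trans hb
  have hρ : 0 < CnormFn C w :=
    CnormFn_pos hCb hC hne hspan (by rintro rfl; simp at hgw)
  have hz : CnormFn C ((CnormFn C w)⁻¹ • w) = 1 := by
    rw [CnormFn_smul (inv_nonneg.2 hρ.le), inv_mul_cancel₀ hρ.ne']
  calc inner ℝ g w ≤ (CnormFn C w)⁻¹ * inner ℝ g w :=
        le_mul_of_one_le_left hgw.le ((one_le_inv₀ hρ).2 hw)
    _ = inner ℝ g ((CnormFn C w)⁻¹ • w) := (real_inner_smul_right _ _ _).symm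
    _ ≤ b := h _ hz

end CNorm

lemma le_of_forall_one_sub_mul_le {K G : ℝ} (h : ∀ t ∈ Ioo (0 : ℝ) 1, (1 - t) * K ≤ G) :
    K ≤ G := by
  have hlim : Tendsto (fun t : ℝ ↦ (1 - t) * K) (𝓝[>] 0) (𝓝 K) := by
    have hcont : Continuous (fun t : ℝ ↦ (1 - t) * K) := by fun_prop
    simpa using hcont.continuousAt (x := 0) |>.tendsto.mono_left nhdsWithin_le_nhds
  exact le_of_tendsto hlim (eventually_of_mem (Ioo_mem_nhdsGT one_pos) h)

lemma UniformlyConvexSet.mul_rpow_inner_le {C : Set (Eucl n)} {nrm : Eucl n → ℝ} {α p : ℝ}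
    (hunif : UniformlyConvexSet C nrm α p) {g x v z : Eucl n} (hx : x ∈ C) (hv : v ∈ C)
    (hmin : ∀ y ∈ C, inner ℝ g v ≤ inner ℝ g y) (hz : nrm (-z) = 1) :
    α * nrm (x - v) ^ p * inner ℝ g z ≤ inner ℝ g (x - v) := by
  refine le_of_forall_one_sub_mul_le fun t ⟨ht0, ht1⟩ ↦ ?_
  have hpush := hmin _ (hunif x hx v hv t ⟨ht0.le, ht1.le⟩ (-z) hz)
  simp only [inner_add_right, inner_neg_right, real_inner_smul_right] at hpush
  have hscaled : t * ((1 - t) * (α * nrm (x - v) ^ p * inner ℝ g z)) ≤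
      t * (inner ℝ g x - inner ℝ g v) := by linarith
  rw [inner_sub_right]
  exact le_of_mul_le_mul_left hscaled ht0

section FrankWolfe

variable {C : Set (Eucl n)} {f : Eucl n → ℝ} {x v : Eucl n}

lemma IsFWVertex.inner_sub_le (hv : IsFWVertex C f x v) {y : Eucl n} (hy : y ∈ C) :
    inner ℝ (gradient f x) (x - y) ≤ inner ℝ (gradient f x) (x - v) := by
  simpa only [inner_sub_right, sub_le_sub_iff_left] using hv.2 y hy

lemma IsFWVertex.gapF_eq (hv : IsFWVertex C f x v) :
    gapF C f x = inner ℝ (gradient f x) (x - v) :=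
  IsGreatest.csSup_eq ⟨⟨v, hv.1, rfl⟩, by rintro _ ⟨y, hy, rfl⟩; exact hv.inner_sub_le hy⟩

lemma IsFWVertex.gapF_nonneg (hx : x ∈ C) (hv : IsFWVertex C f x v) : 0 ≤ gapF C f x := by
  simpa [hv.gapF_eq] using hv.inner_sub_le hx

lemma IsFWVertex.mul_rpow_CnormFn_le_gapF (hCb : Bornology.IsBounded C) (hC : Convex ℝ C)
    (hspan : Submodule.span ℝ (C - C) = ⊤) {α p lam : ℝ} (hα : 0 ≤ α)
    (hunif : UniformlyConvexSet C (CnormFn C) α p) (hx : x ∈ C) (hv : IsFWVertex C f x v)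
    (hgrad : lam ≤ dualCnormFn C (gradient f x)) :
    α * lam * CnormFn C (x - v) ^ p ≤ gapF C f x := by
  set K := α * CnormFn C (x - v) ^ p
  have hK : 0 ≤ K := mul_nonneg hα (rpow_nonneg (CnormFn_nonneg _) _)
  have hgap := hv.gapF_nonneg hx
  have hunit : ∀ z, CnormFn C z = 1 → K * inner ℝ (gradient f x) z ≤ gapF C f x := fun z hz ↦
    hv.gapF_eq ▸ hunif.mul_rpow_inner_le hx hv.1 hv.2 ((CnormFn_neg z).trans hz)
  suffices K * lam ≤ gapF C f x by linarith
  rcases hK.eq_or_lt with hK0 | hKpos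
  · simpa [← hK0] using hgap
  have hdual : dualCnormFn C (gradient f x) ≤ gapF C f x / K :=
    dualCnormFn_le_of_forall_CnormFn_eq_one hCb hC ⟨x, hx⟩ hspan (div_nonneg hgap hK)
      fun z hz ↦ (le_div_iff₀' hKpos).2 (hunit z hz)
  calc K * lam ≤ K * (gapF C f x / K) := mul_le_mul_of_nonneg_left (hgrad.trans hdual) hK
    _ = gapF C f x := mul_div_cancel₀ _ hKpos.ne'

end FrankWolfe

lemma SmoothOver.bregmanD_add_smul_sub_le {C : Set (Eucl n)} {f : Eucl n → ℝ} {L η : ℝ}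
    (hsmooth : SmoothOver C f (CnormFn C) L) (hC : Convex ℝ C) {x v : Eucl n} (hx : x ∈ C)
    (hv : v ∈ C) (hη : η ∈ Icc (0 : ℝ) 1) :
    bregmanD f (x + η • (v - x)) x ≤ L / 2 * η ^ 2 * CnormFn C (x - v) ^ 2 := by
  have hmem : x + η • (v - x) ∈ C := by
    rw [add_comm]
    simpa only [AffineMap.lineMap_apply_module', vadd_eq_add] using
      hC.lineMap_mem hx hv hη
  have h := hsmooth x hx _ hmem
  rw [show x - (x + η • (v - x)) = η • (x - v) by module, CnormFn_smul hη.1] at h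
  rw [bregmanD]
  linarith

lemma sq_le_rpow_mul_rpow_of_mul_rpow_le {N c G p : ℝ} (hN : 0 ≤ N) (hc : 0 < c) (hp : 0 < p)
    (h : c * N ^ p ≤ G) : N ^ 2 ≤ c ^ (-(2 / p)) * G ^ (2 / p) := by
  have hNp : N ^ p ≤ c⁻¹ * G := by rwa [le_inv_mul_iff₀ hc]
  calc N ^ 2 = (N ^ p) ^ (2 / p) := by
        rw [← rpow_mul hN, mul_div_cancel₀ _ hp.ne', rpow_two]
    _ ≤ (c⁻¹ * G) ^ (2 / p) := rpow_le_rpow (rpow_nonneg hN p) hNp (by positivity)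
    _ = c ^ (-(2 / p)) * G ^ (2 / p) := by
        rw [mul_rpow (inv_nonneg.2 hc.le) (by nlinarith [rpow_nonneg hN p]), inv_rpow hc.le,
          rpow_neg hc.le]

theorem strong_growth_of_uniformly_convex_lower_bounded_gradients_general
    (n : ℕ) (C : Set (Eucl n)) (f : Eucl n → ℝ)
    (hCcomp : IsCompact C) (hCconv : Convex ℝ C)
    (hspan : Submodule.span ℝ (C - C) = ⊤)
    (α p : ℝ) (hα : 0 < α) (hp : 2 ≤ p)
    (hunif : UniformlyConvexSet C (CnormFn C) α p)
    (L : ℝ) (hL : 0 < L) (hsmooth : SmoothOver C f (CnormFn C) L)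
    (lam : ℝ) (hlam : 0 < lam)
    (hgrad : ∀ x ∈ C, lam ≤ dualCnormFn C (gradient f x)) :
    StrongGrowth C f (L * (α * lam) ^ (-(2 / p))) (2 / p) := by
  intro x hx v hv η hη
  have hkey := hv.mul_rpow_CnormFn_le_gapF hCcomp.isBounded hCconv hspan hα.le hunif hx
    (hgrad x hx)
  have hnorm := sq_le_rpow_mul_rpow_of_mul_rpow_le (CnormFn_nonneg _) (by positivity)
    (by linarith) hkey
  calc bregmanD f (x + η • (v - x)) x ≤ L / 2 * η ^ 2 * CnormFn C (x - v) ^ 2 :=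
        hsmooth.bregmanD_add_smul_sub_le hCconv hx hv.1 hη
    _ ≤ L / 2 * η ^ 2 * ((α * lam) ^ (-(2 / p)) * gapF C f x ^ (2 / p)) := by gcongr
    _ = L * (α * lam) ^ (-(2 / p)) * η ^ 2 / 2 * gapF C f x ^ (2 / p) := by ring

/-- **Proposition (strong growth from uniform convexity of `C` and lower-bounded gradients).** -/
theorem strong_growth_of_uniformly_convex_lower_bounded_gradients
    (n : ℕ) (C : Set (Eucl n)) (f : Eucl n → ℝ)
    (hCcomp : IsCompact C) (hCconv : Convex ℝ C) (hCne : C.Nonempty)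
    (hspan : Submodule.span ℝ (C - C) = ⊤)
    (α p : ℝ) (hα : 0 < α) (hp : 2 ≤ p)
    (hunif : UniformlyConvexSet C (CnormFn C) α p)
    (hfconv : ConvexOn ℝ C f)
    (U : Set (Eucl n)) (hUopen : IsOpen U) (hCU : C ⊆ U)
    (hfdiff : DifferentiableOn ℝ f U)
    (L : ℝ) (hL : 0 < L) (hsmooth : SmoothOver C f (CnormFn C) L)
    (lam : ℝ) (hlam : 0 < lam)
    (hgrad : ∀ x ∈ C, lam ≤ dualCnormFn C (gradient f x)) :
    StrongGrowth C f (L * (α * lam) ^ (-(2 / p))) (2 / p) :=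
  strong_growth_of_uniformly_convex_lower_bounded_gradients_general n C f hCcomp hCconv hspan α p hα
    hp hunif L hL hsmooth lam hlam hgrad
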